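/- Let n = 2^L with L ≥ 2, and let {ψ_i}_{i=1}^n be an orthonormal basis of ℝ^n with overlap at most K such that for every p ∈ [1,∞] with Hölder conjugate p', ‖ψ_k‖_p · ‖ψ_k‖_{p'} ≤ M holds for every k. Let f ∈ ℝ^n and B ≤ n. For each t = 0, 1, …, L(L−1) set p_t = 1 + t/L with conjugate p'_t, and let S_t be a set of B indices of the B largest values of |⟨f, ψ_k⟩| / ‖ψ_k‖_{p'_t}. Let S = ∪_t S_t (so |S| ≤ B·L²) and f̂_u = Σ_{i∈S} ⟨f, ψ_i⟩ ψ_i. Then for every p ∈ [1,∞): ‖f − f̂_u‖_p ≤ 2·M·K·E_p, where E_p = min over B-sparse z of ‖f − Σ_i z_i ψ_i‖_p. -/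

import Mathlib

open scoped ENNReal

/-- Standard inner product on `ℝ^n`. -/
noncomputable def dotp {n : ℕ} (x y : Fin n → ℝ) : ℝ := ∑ j, x j * y j

/-- The `ℓ_p` norm on `ℝ^n`, for `p ∈ [1, ∞]` (extended-real exponent). -/
noncomputable def lpNorm {n : ℕ} (p : ℝ≥0∞) (x : Fin n → ℝ) : ℝ :=
  if p = ∞ then ⨆ j, |x j| else (∑ j, |x j| ^ p.toReal) ^ (1 / p.toReal)

/-- A vector is `B`-sparse if it has at most `B` nonzero components. -/
def Sparse {n : ℕ} (B : ℕ) (z : Fin n → ℝ) : Prop :=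
  ({i | z i ≠ 0} : Set (Fin n)).ncard ≤ B

/-!
Write `f - f̂_u = ∑_{i ∈ A} c_i ψ_i` with `c_i = ⟨f, ψ_i⟩` and `A` the unselected indices, and fix
a `B`-sparse `z` with residual `g = f - ∑ z_i ψ_i`, so that `⟨g, ψ_i⟩ = c_i - z_i`. Since every
coordinate meets at most `K` of the `ψ_i`,
`‖∑_{i ∈ A} c_i ψ_i‖_p^p ≤ K^{p-1} ∑_{i ∈ A} (|c_i| ‖ψ_i‖_p)^p`, and Hölder on the support of each
`ψ_i` gives dually `∑_i (|⟨g, ψ_i⟩| / ‖ψ_i‖_{p'})^p ≤ K ‖g‖_p^p`.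

To compare the two sums, take the largest grid exponent `p_t ≤ p`. Then `1/p_t - 1/p ≤ 1/L`, so
`‖ψ‖_{p'} ≤ n^{1/L} ‖ψ‖_{p'_t} = 2 ‖ψ‖_{p'_t}`, and `‖ψ‖_p ‖ψ‖_{p'_t} ≤ ‖ψ‖_{p_t} ‖ψ‖_{p'_t} ≤ M`.
An index of `A` outside the support of `z` has `c_i = ⟨g, ψ_i⟩` and is bounded directly. The at
most `B` indices of `A` in the support of `z` are exchanged for the at least as many indices of
`S_t` outside it: these dominate them in the order defining `S_t`, and again `c_k = ⟨g, ψ_k⟩`.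
-/

open Finset

section LpNorm

variable {n : ℕ}

lemma lpNorm_of_ne_top {p : ℝ≥0∞} (hp : p ≠ ∞) (x : Fin n → ℝ) :
    lpNorm p x = (∑ j, |x j| ^ p.toReal) ^ (1 / p.toReal) := if_neg hp

lemma lpNorm_top (x : Fin n → ℝ) : lpNorm ∞ x = ⨆ j, |x j| := if_pos rfl

lemma lpNorm_nonneg (p : ℝ≥0∞) (x : Fin n → ℝ) : 0 ≤ lpNorm p x := by
  unfold lpNorm
  split_ifs
  · exact Real.iSup_nonneg fun _ => abs_nonneg _
  · exact Real.rpow_nonneg (sum_nonneg fun _ _ => Real.rpow_nonneg (abs_nonneg _) _) _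

lemma lpNorm_rpow_toReal {p : ℝ≥0∞} (hp₀ : p ≠ 0) (hp : p ≠ ∞) (x : Fin n → ℝ) :
    lpNorm p x ^ p.toReal = ∑ j, |x j| ^ p.toReal := by
  rw [lpNorm_of_ne_top hp,
    ← Real.rpow_mul (sum_nonneg fun _ _ => Real.rpow_nonneg (abs_nonneg _) _),
    one_div_mul_cancel (ENNReal.toReal_pos hp₀ hp).ne', Real.rpow_one]

lemma abs_le_lpNorm {p : ℝ≥0∞} (hp : p ≠ 0) (x : Fin n → ℝ) (j : Fin n) : |x j| ≤ lpNorm p x := by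
  by_cases hpt : p = ∞
  · rw [hpt, lpNorm_top]
    exact le_ciSup (f := fun j => |x j|) (Finite.bddAbove_range _) j
  · have hr := ENNReal.toReal_pos hp hpt
    rw [← Real.rpow_le_rpow_iff (abs_nonneg _) (lpNorm_nonneg p x) hr, lpNorm_rpow_toReal hp hpt]
    exact single_le_sum (fun j _ => Real.rpow_nonneg (abs_nonneg (x j)) _) (mem_univ j)

lemma lpNorm_pos {p : ℝ≥0∞} (hp : p ≠ 0) {x : Fin n → ℝ} (hx : x ≠ 0) : 0 < lpNorm p x := by
  obtain ⟨j, hj⟩ := Function.ne_iff.mp hx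
  exact (abs_pos.mpr hj).trans_le (abs_le_lpNorm hp x j)

lemma lpNorm_anti {p q : ℝ≥0∞} (hp : p ≠ 0) (hpq : p ≤ q) (x : Fin n → ℝ) :
    lpNorm q x ≤ lpNorm p x := by
  by_cases hqt : q = ∞
  · rw [hqt, lpNorm_top]
    exact Real.iSup_le (abs_le_lpNorm hp x) (lpNorm_nonneg p x)
  have hpt : p ≠ ∞ := ne_top_of_le_ne_top hqt hpq
  have hq : q ≠ 0 := (zero_lt_iff.mpr hp |>.trans_le hpq).ne'
  set N := lpNorm p x
  set r := p.toReal
  set s := q.toReal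
  have hr : 0 < r := ENNReal.toReal_pos hp hpt
  have hrs : r ≤ s := ENNReal.toReal_mono hqt hpq
  have hN := lpNorm_nonneg p x
  rw [← Real.rpow_le_rpow_iff (lpNorm_nonneg q x) hN (hr.trans_le hrs), lpNorm_rpow_toReal hq hqt]
  calc ∑ j, |x j| ^ s = ∑ j, |x j| ^ r * |x j| ^ (s - r) := by
        refine sum_congr rfl fun j _ => ?_
        rw [← Real.rpow_add' (abs_nonneg _) (by linarith), add_sub_cancel]
    _ ≤ ∑ j, |x j| ^ r * N ^ (s - r) := by
        gcongr with j
        exact abs_le_lpNorm hp x j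
    _ = N ^ s := by
        rw [← sum_mul, ← lpNorm_rpow_toReal hp hpt, ← Real.rpow_add' hN (by linarith),
          add_sub_cancel]

lemma sum_rpow_le_card_rpow_mul_lpNorm_rpow {p q : ℝ≥0∞} (hp : p ≠ 0) (hpt : p ≠ ∞) (hpq : p ≤ q)
    (x : Fin n → ℝ) :
    ∑ j, |x j| ^ p.toReal ≤ (n : ℝ) ^ (1 - p.toReal * q⁻¹.toReal) * lpNorm q x ^ p.toReal := by
  set r := p.toReal
  have hr : 0 < r := ENNReal.toReal_pos hp hpt
  by_cases hqt : q = ∞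
  · subst hqt
    simp only [ENNReal.inv_top, ENNReal.toReal_zero, mul_zero, sub_zero, Real.rpow_one]
    calc ∑ j, |x j| ^ r ≤ ∑ _j : Fin n, lpNorm ∞ x ^ r := by
          gcongr with j
          exact abs_le_lpNorm ENNReal.top_ne_zero x j
      _ = n * lpNorm ∞ x ^ r := by simp
  have hq : q ≠ 0 := (zero_lt_iff.mpr hp |>.trans_le hpq).ne'
  set s := q.toReal
  have hs : 0 < s := ENNReal.toReal_pos hq hqt
  have hrs : 1 ≤ s / r := (one_le_div hr).mpr (ENNReal.toReal_mono hqt hpq)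
  have holder := Real.inner_le_weight_mul_Lp_of_nonneg univ hrs (fun _ => 1) (fun j => |x j| ^ r)
    (fun _ => zero_le_one) (fun j => Real.rpow_nonneg (abs_nonneg _) _)
  simp only [one_mul, sum_const, card_univ, Fintype.card_fin, nsmul_eq_mul, mul_one] at holder
  have hpow : ∀ j, (|x j| ^ r) ^ (s / r) = |x j| ^ s := fun j => by
    rw [← Real.rpow_mul (abs_nonneg _), mul_div_cancel₀ _ hr.ne']
  rw [sum_congr rfl fun j _ => hpow j, ← lpNorm_rpow_toReal hq hqt,
    ← Real.rpow_mul (lpNorm_nonneg q x), inv_div, mul_div_cancel₀ _ hs.ne'] at holder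
  convert holder using 3
  rw [ENNReal.toReal_inv, div_eq_mul_inv]

lemma lpNorm_le_card_rpow_mul_lpNorm {p q : ℝ≥0∞} (hp : p ≠ 0) (hpq : p ≤ q) (x : Fin n → ℝ) :
    lpNorm p x ≤ (n : ℝ) ^ (p⁻¹.toReal - q⁻¹.toReal) * lpNorm q x := by
  by_cases hpt : p = ∞
  · subst hpt
    rw [top_le_iff.mp hpq, sub_self, Real.rpow_zero, one_mul]
  set r := p.toReal
  have hr : 0 < r := ENNReal.toReal_pos hp hpt
  have hn := Nat.cast_nonneg (α := ℝ) n
  rw [← Real.rpow_le_rpow_iff (lpNorm_nonneg p x) (by positivity [lpNorm_nonneg q x]) hr,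
    lpNorm_rpow_toReal hp hpt, Real.mul_rpow (by positivity) (lpNorm_nonneg q x),
    ← Real.rpow_mul hn, ENNReal.toReal_inv, sub_mul, inv_mul_cancel₀ hr.ne', mul_comm _ r]
  exact sum_rpow_le_card_rpow_mul_lpNorm_rpow hp hpt hpq x

lemma dotp_comm (x y : Fin n → ℝ) : dotp x y = dotp y x := dotProduct_comm x y

lemma lpNorm_one (x : Fin n → ℝ) : lpNorm 1 x = ∑ j, |x j| := by
  simp [lpNorm_of_ne_top ENNReal.one_ne_top]

lemma abs_dotp_le_lpNorm_one_mul_lpNorm_top (x y : Fin n → ℝ) :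
    |dotp x y| ≤ lpNorm 1 x * lpNorm ∞ y := by
  rw [lpNorm_one, sum_mul]
  refine (abs_sum_le_sum_abs _ _).trans (sum_le_sum fun j _ => ?_)
  rw [abs_mul]
  exact mul_le_mul_of_nonneg_left (abs_le_lpNorm ENNReal.top_ne_zero y j) (abs_nonneg _)

lemma abs_dotp_le_lpNorm_mul_lpNorm {p q : ℝ≥0∞} (hpq : p.HolderConjugate q) (x y : Fin n → ℝ) :
    |dotp x y| ≤ lpNorm p x * lpNorm q y := by
  by_cases hpt : p = ∞
  · rw [hpt, (ENNReal.HolderConjugate.eq_top_iff_eq_one p q).mp hpt, dotp_comm, mul_comm]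
    exact abs_dotp_le_lpNorm_one_mul_lpNorm_top y x
  by_cases hqt : q = ∞
  · rw [hqt, (ENNReal.HolderConjugate.eq_top_iff_eq_one q p).mp hqt]
    exact abs_dotp_le_lpNorm_one_mul_lpNorm_top x y
  rw [lpNorm_of_ne_top hpt, lpNorm_of_ne_top hqt]
  have h := Real.inner_le_Lp_mul_Lq univ (fun j => |x j|) (fun j => |y j|)
    (ENNReal.HolderConjugate.toReal_of_ne_top hpt hqt)
  simp only [abs_abs, ← abs_mul] at h
  exact (abs_sum_le_sum_abs _ _).trans h

end LpNorm

section Overlap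

lemma rpow_abs_sum_le_of_card_support_le {ι : Type*} (s : Finset ι) (f : ι → ℝ) {K : ℕ}
    (hK : #{i ∈ s | f i ≠ 0} ≤ K) {r : ℝ} (hr : 1 ≤ r) :
    |∑ i ∈ s, f i| ^ r ≤ (K : ℝ) ^ (r - 1) * ∑ i ∈ s, |f i| ^ r := by
  classical
  set s' := {i ∈ s | f i ≠ 0}
  calc |∑ i ∈ s, f i| ^ r = |∑ i ∈ s', f i| ^ r := by rw [sum_filter_ne_zero]
    _ ≤ (∑ i ∈ s', |f i|) ^ r := by gcongr; exact abs_sum_le_sum_abs _ _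
    _ ≤ (#s' : ℝ) ^ (r - 1) * ∑ i ∈ s', |f i| ^ r := Real.rpow_sum_le_const_mul_sum_rpow _ _ hr
    _ ≤ (K : ℝ) ^ (r - 1) * ∑ i ∈ s, |f i| ^ r := by
        gcongr
        exact filter_subset _ _

variable {n : ℕ} {ι : Type*} [Fintype ι] {ψ : ι → Fin n → ℝ} {K : ℕ}

lemma lpNorm_sum_smul_rpow_le (hK : ∀ j, #{i | ψ i j ≠ 0} ≤ K) {p : ℝ≥0∞} (hp : 1 ≤ p)
    (hpt : p ≠ ∞) (A : Finset ι) (c : ι → ℝ) :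
    lpNorm p (fun j => ∑ i ∈ A, c i * ψ i j) ^ p.toReal ≤
      (K : ℝ) ^ (p.toReal - 1) * ∑ i ∈ A, (|c i| * lpNorm p (ψ i)) ^ p.toReal := by
  have hp₀ : p ≠ 0 := (zero_lt_one.trans_le hp).ne'
  have hr : 1 ≤ p.toReal := by simpa using ENNReal.toReal_mono hpt hp
  have hsupp : ∀ j, #{i ∈ A | c i * ψ i j ≠ 0} ≤ K := fun j =>
    (card_le_card fun i => by simp +contextual).trans (hK j)
  calc lpNorm p (fun j => ∑ i ∈ A, c i * ψ i j) ^ p.toReal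
      = ∑ j, |∑ i ∈ A, c i * ψ i j| ^ p.toReal := lpNorm_rpow_toReal hp₀ hpt _
    _ ≤ ∑ j, (K : ℝ) ^ (p.toReal - 1) * ∑ i ∈ A, |c i * ψ i j| ^ p.toReal :=
        sum_le_sum fun j _ => rpow_abs_sum_le_of_card_support_le A _ (hsupp j) hr
    _ = (K : ℝ) ^ (p.toReal - 1) * ∑ i ∈ A, (|c i| * lpNorm p (ψ i)) ^ p.toReal := by
        rw [← mul_sum, sum_comm]
        congr 1
        refine sum_congr rfl fun i _ => ?_
        rw [Real.mul_rpow (abs_nonneg _) (lpNorm_nonneg _ _), lpNorm_rpow_toReal hp₀ hpt, mul_sum]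
        simp only [abs_mul, Real.mul_rpow (abs_nonneg _) (abs_nonneg _)]

lemma sum_abs_dotp_div_lpNorm_rpow_le (hK : ∀ j, #{i | ψ i j ≠ 0} ≤ K) {p q : ℝ≥0∞}
    (hpq : p.HolderConjugate q) (hpt : p ≠ ∞) (g : Fin n → ℝ) :
    ∑ i, (|dotp g (ψ i)| / lpNorm q (ψ i)) ^ p.toReal ≤ K * lpNorm p g ^ p.toReal := by
  have hp₀ : p ≠ 0 := ENNReal.HolderConjugate.ne_zero p q
  have hr : 0 < p.toReal := ENNReal.toReal_pos hp₀ hpt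
  -- Hölder on the support of `ψ i` only, so that each `g j` is counted at most `K` times.
  have hloc : ∀ i, (|dotp g (ψ i)| / lpNorm q (ψ i)) ^ p.toReal ≤
      ∑ j, if ψ i j ≠ 0 then |g j| ^ p.toReal else 0 := fun i => by
    set gi : Fin n → ℝ := fun j => if ψ i j ≠ 0 then g j else 0
    have hdot : dotp g (ψ i) = dotp gi (ψ i) :=
      sum_congr rfl fun j _ => by by_cases h : ψ i j = 0 <;> simp [gi, h]
    have hgi : ∑ j, |gi j| ^ p.toReal = ∑ j, if ψ i j ≠ 0 then |g j| ^ p.toReal else 0 :=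
      sum_congr rfl fun j _ => by by_cases h : ψ i j = 0 <;> simp [gi, h, hr.ne']
    rw [← hgi, ← lpNorm_rpow_toReal hp₀ hpt]
    gcongr
    · exact div_nonneg (abs_nonneg _) (lpNorm_nonneg _ _)
    rw [hdot]
    exact div_le_of_le_mul₀ (lpNorm_nonneg _ _) (lpNorm_nonneg _ _)
      (abs_dotp_le_lpNorm_mul_lpNorm hpq gi (ψ i))
  calc ∑ i, (|dotp g (ψ i)| / lpNorm q (ψ i)) ^ p.toReal
      ≤ ∑ i, ∑ j, if ψ i j ≠ 0 then |g j| ^ p.toReal else 0 := sum_le_sum fun i _ => hloc i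
    _ = ∑ j, #{i | ψ i j ≠ 0} * |g j| ^ p.toReal := by
        rw [sum_comm]
        simp only [← sum_filter, sum_const, nsmul_eq_mul]
    _ ≤ ∑ j, K * |g j| ^ p.toReal := by
        gcongr with j
        exact_mod_cast hK j
    _ = K * lpNorm p g ^ p.toReal := by rw [← mul_sum, lpNorm_rpow_toReal hp₀ hpt]

end Overlap

section Exchange
variable {ι : Type*}

lemma sum_le_sum_of_card_le_of_forall_le {I J : Finset ι} (hIJ : #I ≤ #J) {w : ι → ℝ}
    (hw : ∀ k ∈ J, 0 ≤ w k) (hle : ∀ i ∈ I, ∀ k ∈ J, w i ≤ w k) :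
    ∑ i ∈ I, w i ≤ ∑ k ∈ J, w k := by
  rcases J.eq_empty_or_nonempty with rfl | hJ
  · simp [card_eq_zero.mp (Nat.le_zero.mp hIJ)]
  obtain ⟨k₀, hk₀, hmin⟩ := J.exists_min_image w hJ
  calc ∑ i ∈ I, w i ≤ #I • w k₀ := sum_le_card_nsmul _ _ _ fun i hi => hle i hi k₀ hk₀
    _ ≤ #J • w k₀ := nsmul_le_nsmul_left (hw k₀ hk₀) hIJ
    _ ≤ ∑ k ∈ J, w k := card_nsmul_le_sum _ _ _ hmin

lemma sum_le_sum_of_exchange [Fintype ι] [DecidableEq ι] {A S T : Finset ι} (hAS : Disjoint A S)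
    (hTS : #T ≤ #S) {u v w : ι → ℝ} (hv : ∀ i, 0 ≤ v i) (hw : ∀ k ∈ S, 0 ≤ w k)
    (huv : ∀ i ∈ A, i ∉ T → u i ≤ v i) (huw : ∀ i ∈ A, i ∈ T → u i ≤ w i)
    (hwA : ∀ i ∈ A, ∀ k ∈ S, w i ≤ w k) (hwv : ∀ k ∈ S, k ∉ T → w k ≤ v k) :
    ∑ i ∈ A, u i ≤ ∑ i, v i := by
  have hcard : #(A ∩ T) ≤ #(S \ T) := by
    have hsub : A ∩ T ⊆ T \ S := fun i hi => by
      rw [mem_inter] at hi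
      exact mem_sdiff.mpr ⟨hi.2, disjoint_left.mp hAS hi.1⟩
    have h₁ := card_sdiff_add_card_inter T S
    have h₂ := card_sdiff_add_card_inter S T
    rw [inter_comm] at h₂
    have := card_le_card hsub
    omega
  have hdisj : Disjoint (S \ T) (A \ T) :=
    disjoint_left.mpr fun i hS hA => disjoint_left.mp hAS (sdiff_subset hA) (sdiff_subset hS)
  calc ∑ i ∈ A, u i = ∑ i ∈ A ∩ T, u i + ∑ i ∈ A \ T, u i := (sum_inter_add_sum_sdiff A T u).symm
    _ ≤ ∑ i ∈ A ∩ T, w i + ∑ i ∈ A \ T, v i := by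
        gcongr with i hi i hi
        · exact huw i (mem_inter.mp hi).1 (mem_inter.mp hi).2
        · exact huv i (mem_sdiff.mp hi).1 (mem_sdiff.mp hi).2
    _ ≤ ∑ k ∈ S \ T, w k + ∑ i ∈ A \ T, v i := by
        grw [sum_le_sum_of_card_le_of_forall_le hcard (fun k hk => hw k (mem_sdiff.mp hk).1)
          fun i hi k hk => hwA i (mem_inter.mp hi).1 k (mem_sdiff.mp hk).1]
    _ ≤ ∑ k ∈ S \ T, v k + ∑ i ∈ A \ T, v i := by
        gcongr with k hk
        exact hwv k (mem_sdiff.mp hk).1 (mem_sdiff.mp hk).2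
    _ ≤ ∑ i, v i := by
        rw [← sum_union hdisj]
        exact sum_le_sum_of_subset_of_nonneg (subset_univ _) fun i _ _ => hv i

lemma mul_le_div_of_mul_le {x a b M : ℝ} (hx : 0 ≤ x) (hb : 0 < b) (h : a * b ≤ M) :
    x * a ≤ M * x / b := by
  rw [le_div_iff₀ hb]
  nlinarith

lemma sum_rpow_le_of_greedy [Fintype ι] [DecidableEq ι] {A S : Finset ι} (hAS : Disjoint A S)
    {c z a b e : ι → ℝ} (hz : #{i | z i ≠ 0} ≤ #S) {M r : ℝ} (hM : 0 ≤ M) (hr : 0 ≤ r)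
    (ha : ∀ k, 0 ≤ a k) (hb : ∀ k, 0 < b k) (he : ∀ k, 0 < e k)
    (hab : ∀ k, a k * b k ≤ M) (hae : ∀ k, a k * e k ≤ M) (hbe : ∀ k, b k ≤ 2 * e k)
    (hgreedy : ∀ i ∈ A, ∀ k ∈ S, |c i| / e i ≤ |c k| / e k) :
    ∑ i ∈ A, (|c i| * a i) ^ r ≤ (2 * M) ^ r * ∑ i, (|c i - z i| / b i) ^ r := by
  have hv : ∀ i, 0 ≤ 2 * M * |c i - z i| / b i := fun i => by have := hb i; positivity
  have hw : ∀ i, 0 ≤ M * |c i| / e i := fun i => by have := he i; positivity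
  have hwv : ∀ k, z k = 0 → M * |c k| / e k ≤ 2 * M * |c k - z k| / b k := fun k hzk => by
    rw [hzk, sub_zero, div_le_div_iff₀ (he k) (hb k)]
    nlinarith [hbe k, mul_nonneg hM (abs_nonneg (c k))]
  calc ∑ i ∈ A, (|c i| * a i) ^ r
      ≤ ∑ i, (2 * M * |c i - z i| / b i) ^ r := by
        refine sum_le_sum_of_exchange hAS hz (u := fun i => (|c i| * a i) ^ r)
          (fun i => Real.rpow_nonneg (hv i) r) (fun k _ => Real.rpow_nonneg (hw k) r)
          (fun i _ hi => ?_) (fun i _ _ => ?_) (fun i hi k hk => ?_) (fun k _ hk => ?_)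
        · have hzi : z i = 0 := by simpa using hi
          refine Real.rpow_le_rpow (by have := ha i; positivity) ?_ hr
          refine (mul_le_div_of_mul_le (abs_nonneg _) (hb i) (hab i)).trans ?_
          rw [hzi, sub_zero, mul_assoc]
          exact div_le_div_of_nonneg_right
            (by linarith [mul_nonneg hM (abs_nonneg (c i))]) (hb i).le
        · exact Real.rpow_le_rpow (by have := ha i; positivity)
            (mul_le_div_of_mul_le (abs_nonneg _) (he i) (hae i)) hr
        · refine Real.rpow_le_rpow (hw i) ?_ hr
          simp only [mul_div_assoc]
          exact mul_le_mul_of_nonneg_left (hgreedy i hi k hk) hM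
        · exact Real.rpow_le_rpow (hw k) (hwv k (by simpa using hk)) hr
    _ = (2 * M) ^ r * ∑ i, (|c i - z i| / b i) ^ r := by
        rw [mul_sum]
        refine sum_congr rfl fun i _ => ?_
        rw [mul_div_assoc, Real.mul_rpow (by positivity) (div_nonneg (abs_nonneg _) (hb i).le)]

end Exchange

section Orthonormal
variable {n : ℕ}

lemma dotp_sub_sum_smul_of_orthonormal {ι : Type*} [Fintype ι] [DecidableEq ι]
    {ψ : ι → Fin n → ℝ} (horth : ∀ i k, dotp (ψ i) (ψ k) = if i = k then 1 else 0)
    (f : Fin n → ℝ) (z : ι → ℝ) (k : ι) :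
    dotp (fun j => f j - ∑ i, z i * ψ i j) (ψ k) = dotp f (ψ k) - z k := by
  have h i : ∑ j, ψ i j * ψ k j = if i = k then 1 else 0 := horth i k
  simp only [dotp, sub_mul, sum_sub_distrib, sum_mul, mul_assoc]
  rw [sum_comm (f := fun j i => z i * (ψ i j * ψ k j))]
  simp [← mul_sum, h]

lemma sum_dotp_smul_of_orthonormal {ψ : Fin n → Fin n → ℝ}
    (horth : ∀ i k, dotp (ψ i) (ψ k) = if i = k then 1 else 0) (f : Fin n → ℝ) (j : Fin n) :
    ∑ i, dotp f (ψ i) * ψ i j = f j := by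
  have h : (Matrix.of ψ).transpose * Matrix.of ψ = 1 :=
    mul_eq_one_comm.mp <| Matrix.ext fun i k => by
      simpa [Matrix.mul_apply, Matrix.one_apply, dotp] using horth i k
  have := congrFun (congrArg (Matrix.mulVec · f) h) j
  rw [← Matrix.mulVec_mulVec, Matrix.one_mulVec] at this
  simpa [Matrix.mulVec, dotProduct, dotp, mul_comm] using this

end Orthonormal

section Exponents

lemma exists_grid_exponent_real {L : ℕ} (hL : 1 ≤ L) {x : ℝ} (hx : 1 ≤ x) :
    ∃ t ≤ L * (L - 1), 1 + (t : ℝ) / L ≤ x ∧ (1 + (t : ℝ) / L)⁻¹ - x⁻¹ ≤ (L : ℝ)⁻¹ := by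
  have hL' : (0 : ℝ) < L := by exact_mod_cast hL
  have hxL : 0 ≤ (x - 1) * L := by nlinarith
  rcases le_total ⌊(x - 1) * L⌋₊ (L * (L - 1)) with h | h
  · set P := 1 + (⌊(x - 1) * L⌋₊ : ℝ) / L
    have hP : 1 ≤ P := le_add_of_nonneg_right (by positivity)
    have hPx : P ≤ x := by
      rw [← le_sub_iff_add_le', div_le_iff₀ hL']
      exact Nat.floor_le hxL
    -- `x` lies below the next grid point, at distance at most `1 / L` from `P`
    have hxP : x - P ≤ (L : ℝ)⁻¹ := by
      have := Nat.lt_floor_add_one ((x - 1) * L)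
      rw [← lt_div_iff₀ hL', add_div, one_div] at this
      simp only [P]
      linarith
    refine ⟨_, h, hPx, ?_⟩
    rw [inv_sub_inv (by positivity) (by positivity)]
    calc (x - P) / (P * x) ≤ x - P := div_le_self (by linarith) (by nlinarith)
      _ ≤ (L : ℝ)⁻¹ := hxP
  · refine ⟨L * (L - 1), le_rfl, ?_, ?_⟩ <;>
      rw [Nat.cast_mul, Nat.cast_sub hL, Nat.cast_one, mul_div_cancel_left₀ _ hL'.ne',
        add_sub_cancel]
    · have := (Nat.le_floor_iff hxL).mp h
      push_cast [Nat.cast_sub hL] at this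
      nlinarith
    · linarith [inv_nonneg.mpr (zero_le_one.trans hx)]

lemma exists_grid_exponent {L : ℕ} (hL : 1 ≤ L) {p : ℝ≥0∞} (hp : 1 ≤ p) (hpt : p ≠ ∞) :
    ∃ t ≤ L * (L - 1), 1 + (t : ℝ≥0∞) / L ≤ p ∧
      (1 + (t : ℝ≥0∞) / L)⁻¹.toReal - p⁻¹.toReal ≤ (L : ℝ)⁻¹ := by
  obtain ⟨t, ht, hle, hgap⟩ :=
    exists_grid_exponent_real hL (by simpa using ENNReal.toReal_mono hpt hp)
  have hPt : 1 + (t : ℝ≥0∞) / L ≠ ∞ := by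
    have : (L : ℝ≥0∞) ≠ 0 := by exact_mod_cast (by omega : L ≠ 0)
    finiteness
  have hPr : (1 + (t : ℝ≥0∞) / L).toReal = 1 + (t : ℝ) / L := by
    rw [ENNReal.toReal_add ENNReal.one_ne_top (by finiteness), ENNReal.toReal_div]
    simp
  refine ⟨t, ht, (ENNReal.toReal_le_toReal hPt hpt).mp (hPr ▸ hle), ?_⟩
  rwa [ENNReal.toReal_inv, ENNReal.toReal_inv, hPr]

lemma ENNReal.HolderConjugate.inv_toReal {p q : ℝ≥0∞} (h : p.HolderConjugate q) :
    q⁻¹.toReal = 1 - p⁻¹.toReal := by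
  rw [← ENNReal.HolderConjugate.one_sub_inv p q,
    ENNReal.toReal_sub_of_le (ENNReal.inv_le_one.mpr h.one_le) ENNReal.one_ne_top,
    ENNReal.toReal_one]

lemma lpNorm_le_two_mul_of_holderConjugate {n L : ℕ} (hn : n = 2 ^ L) {P P' p p' : ℝ≥0∞}
    (hP : P.HolderConjugate P') (hp : p.HolderConjugate p') (hPp : P ≤ p)
    (hgap : P⁻¹.toReal - p⁻¹.toReal ≤ (L : ℝ)⁻¹) (x : Fin n → ℝ) :
    lpNorm p' x ≤ 2 * lpNorm P' x := by
  have hp'P' : p' ≤ P' := by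
    rw [← ENNReal.inv_le_inv, ← ENNReal.HolderConjugate.one_sub_inv P P',
      ← ENNReal.HolderConjugate.one_sub_inv p p']
    exact tsub_le_tsub_left (ENNReal.inv_le_inv.mpr hPp) 1
  refine (lpNorm_le_card_rpow_mul_lpNorm (ENNReal.HolderConjugate.ne_zero p' p) hp'P' x).trans ?_
  gcongr
  · exact lpNorm_nonneg _ _
  have hn1 : (1 : ℝ) ≤ n := by exact_mod_cast hn ▸ Nat.one_le_two_pow
  calc (n : ℝ) ^ (p'⁻¹.toReal - P'⁻¹.toReal) ≤ (n : ℝ) ^ (L : ℝ)⁻¹ := by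
        refine Real.rpow_le_rpow_of_exponent_le hn1 ?_
        rw [hp.inv_toReal, hP.inv_toReal]
        linarith
    _ = 2 ^ ((L : ℝ) * (L : ℝ)⁻¹) := by
        rw [hn, Nat.cast_pow, Nat.cast_ofNat, ← Real.rpow_natCast, ← Real.rpow_mul zero_le_two]
    _ ≤ 2 := Real.rpow_le_self_of_one_le one_le_two mul_inv_le_one

lemma exists_grid_conjExponent {ι : Type*} {n L : ℕ} (hL : 1 ≤ L) (hn : n = 2 ^ L)
    {ψ : ι → Fin n → ℝ} {M : ℝ}
    (hM : ∀ p q : ℝ≥0∞, 1 ≤ p → 1 / p + 1 / q = 1 → ∀ k, lpNorm p (ψ k) * lpNorm q (ψ k) ≤ M)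
    {q : ℕ → ℝ≥0∞} (hq : ∀ t ≤ L * (L - 1), 1 / (1 + (t : ℝ≥0∞) / (L : ℝ≥0∞)) + 1 / q t = 1)
    {p p' : ℝ≥0∞} (hpp' : p.HolderConjugate p') (hpt : p ≠ ∞) :
    ∃ t ≤ L * (L - 1), q t ≠ 0 ∧ (∀ k, lpNorm p (ψ k) * lpNorm (q t) (ψ k) ≤ M) ∧
      ∀ x : Fin n → ℝ, lpNorm p' x ≤ 2 * lpNorm (q t) x := by
  obtain ⟨t, ht, hPp, hgap⟩ := exists_grid_exponent hL hpp'.one_le hpt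
  have hPQ : (1 + (t : ℝ≥0∞) / L).HolderConjugate (q t) :=
    ENNReal.holderConjugate_iff.mpr (by simpa using hq t ht)
  refine ⟨t, ht, ENNReal.HolderConjugate.ne_zero (q t) (1 + (t : ℝ≥0∞) / L), fun k => ?_,
    lpNorm_le_two_mul_of_holderConjugate hn hPQ hpp' hPp hgap⟩
  exact (mul_le_mul_of_nonneg_right (lpNorm_anti (ENNReal.HolderConjugate.ne_zero _ (q t)) hPp _)
    (lpNorm_nonneg _ _)).trans (hM _ _ hPQ.one_le (hq t ht) k)

end Exponents

section Residual
variable {n : ℕ} {ι : Type*} [Fintype ι] [DecidableEq ι] {ψ : ι → Fin n → ℝ} {K : ℕ}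

theorem lpNorm_sum_smul_le_of_greedy (hK : ∀ j, #{i | ψ i j ≠ 0} ≤ K) (hψ : ∀ k, ψ k ≠ 0)
    {p p' Q : ℝ≥0∞} (hpp' : p.HolderConjugate p') (hpt : p ≠ ∞) (hQ : Q ≠ 0) {M : ℝ}
    (hM : 0 ≤ M) (hMp' : ∀ k, lpNorm p (ψ k) * lpNorm p' (ψ k) ≤ M)
    (hMQ : ∀ k, lpNorm p (ψ k) * lpNorm Q (ψ k) ≤ M)
    (hp'Q : ∀ k, lpNorm p' (ψ k) ≤ 2 * lpNorm Q (ψ k))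
    {A S : Finset ι} (hAS : Disjoint A S) {c z : ι → ℝ} (hz : #{i | z i ≠ 0} ≤ #S)
    (hgreedy : ∀ i ∈ A, ∀ k ∈ S, |c i| / lpNorm Q (ψ i) ≤ |c k| / lpNorm Q (ψ k))
    {g : Fin n → ℝ} (hg : ∀ k, dotp g (ψ k) = c k - z k) :
    lpNorm p (fun j => ∑ i ∈ A, c i * ψ i j) ≤ 2 * M * K * lpNorm p g := by
  have hp₀ : p ≠ 0 := ENNReal.HolderConjugate.ne_zero p p'
  set r := p.toReal
  have hr : 0 < r := ENNReal.toReal_pos hp₀ hpt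
  have hN := lpNorm_nonneg p g
  rw [← Real.rpow_le_rpow_iff (lpNorm_nonneg _ _) (by positivity) hr]
  calc lpNorm p (fun j => ∑ i ∈ A, c i * ψ i j) ^ r
      ≤ (K : ℝ) ^ (r - 1) * ∑ i ∈ A, (|c i| * lpNorm p (ψ i)) ^ r :=
        lpNorm_sum_smul_rpow_le hK hpp'.one_le hpt A c
    _ ≤ (K : ℝ) ^ (r - 1) * ((2 * M) ^ r * ∑ i, (|c i - z i| / lpNorm p' (ψ i)) ^ r) := by
        gcongr
        exact sum_rpow_le_of_greedy hAS hz hM hr.le (fun k => lpNorm_nonneg _ _)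
          (fun k => lpNorm_pos (ENNReal.HolderConjugate.ne_zero p' p) (hψ k))
          (fun k => lpNorm_pos hQ (hψ k)) hMp' hMQ hp'Q hgreedy
    _ ≤ (K : ℝ) ^ (r - 1) * ((2 * M) ^ r * (K * lpNorm p g ^ r)) := by
        gcongr
        simpa only [hg] using sum_abs_dotp_div_lpNorm_rpow_le hK hpp' hpt g
    _ = (2 * M * K * lpNorm p g) ^ r := by
        have hKr : (K : ℝ) ^ (r - 1) * K = K ^ r := by
          conv_rhs => rw [← sub_add_cancel r 1,
            Real.rpow_add' (Nat.cast_nonneg K) (by simpa using hr.ne'), Real.rpow_one]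
        rw [Real.mul_rpow (by positivity) hN, Real.mul_rpow (by positivity) (Nat.cast_nonneg K),
          ← hKr]
        ring

end Residual

lemma le_mul_csInf_of_forall_le {s : Set ℝ} (hs : s.Nonempty) {a c : ℝ} (hc : 0 ≤ c)
    (h : ∀ e ∈ s, a ≤ c * e) : a ≤ c * sInf s := by
  rw [← smul_eq_mul, ← Real.sInf_smul_of_nonneg hc]
  exact le_csInf (hs.smul_set) fun _ ⟨e, he, hce⟩ => hce ▸ h e he

theorem stmt9_general {L n B K : ℕ} (hL : 2 ≤ L) (hn : n = 2 ^ L)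
    (ψ : Fin n → Fin n → ℝ)
    (horth : ∀ i k, dotp (ψ i) (ψ k) = if i = k then (1 : ℝ) else 0)
    (hK : ∀ j : Fin n, ({i | ψ i j ≠ 0} : Set (Fin n)).ncard ≤ K)
    (M : ℝ)
    (hM : ∀ p q : ℝ≥0∞, 1 ≤ p → 1 / p + 1 / q = 1 →
      ∀ k, lpNorm p (ψ k) * lpNorm q (ψ k) ≤ M)
    (f : Fin n → ℝ)
    (q : ℕ → ℝ≥0∞)
    (hq : ∀ t ≤ L * (L - 1), 1 / (1 + (t : ℝ≥0∞) / (L : ℝ≥0∞)) + 1 / q t = 1)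
    (S : ℕ → Finset (Fin n))
    (hScard : ∀ t ≤ L * (L - 1), (S t).card = B)
    (hSord : ∀ t ≤ L * (L - 1), ∀ i ∈ S t, ∀ k ∉ S t,
      |dotp f (ψ k)| / lpNorm (q t) (ψ k) ≤ |dotp f (ψ i)| / lpNorm (q t) (ψ i))
    (Sall : Finset (Fin n)) (hSall : Sall = (Finset.range (L * (L - 1) + 1)).biUnion S)
    (fu : Fin n → ℝ) (hfu : ∀ j, fu j = ∑ i ∈ Sall, dotp f (ψ i) * ψ i j) :
    ∀ p : ℝ≥0∞, 1 ≤ p → p ≠ ∞ →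
      lpNorm p (fun j => f j - fu j) ≤
        2 * M * (K : ℝ) *
          sInf {e : ℝ | ∃ z : Fin n → ℝ, Sparse B z ∧
            e = lpNorm p (fun j => f j - ∑ i, z i * ψ i j)} := by
  intro p hp hpt
  have hψ : ∀ k, ψ k ≠ 0 := fun k h => by simpa [h, dotp] using horth k k
  have hK' : ∀ j, #{i | ψ i j ≠ 0} ≤ K := fun j => by
    simpa [Set.ncard_eq_toFinset_card'] using hK j
  have hpp' : p.HolderConjugate p.conjExponent := .conjExponent hp
  have hMp' k := hM p _ hp (by simpa using hpp'.inv_add_inv_eq_one) k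
  have hM0 : 0 ≤ M := (mul_nonneg (lpNorm_nonneg _ _) (lpNorm_nonneg _ _)).trans
    (hMp' ⟨0, hn ▸ Nat.two_pow_pos L⟩)
  obtain ⟨t, ht, hQ0, hMQ, hp'Q⟩ := exists_grid_conjExponent (by omega) hn hM hq hpp' hpt
  have hSt : S t ⊆ Sall := hSall ▸ subset_biUnion_of_mem S (mem_range.mpr (by omega))
  have hres : (fun j => f j - fu j) = fun j => ∑ i ∈ univ \ Sall, dotp f (ψ i) * ψ i j := by
    ext j
    rw [sum_sdiff_eq_sub (subset_univ _), sum_dotp_smul_of_orthonormal horth, hfu]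
  refine le_mul_csInf_of_forall_le ?_ (by positivity) ?_
  · exact ⟨_, 0, by simp [Sparse], rfl⟩
  rintro _ ⟨z, hz, rfl⟩
  rw [hres]
  refine lpNorm_sum_smul_le_of_greedy hK' hψ hpp' hpt hQ0 hM0 hMp' hMQ (fun k => hp'Q _)
    (sdiff_disjoint.mono_right hSt) ?_ (fun i hi k hk => hSord t ht k hk i ?_)
    (dotp_sub_sum_smul_of_orthonormal horth f z)
  · simpa [Sparse, Set.ncard_eq_toFinset_card', hScard t ht] using hz
  · exact fun hiS => (mem_sdiff.mp hi).2 (hSt hiS)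

/-- universal representation: let `n = 2^L` with `L ≥ 2`, and let `{ψ_i}`
be an orthonormal basis of `ℝ^n` with overlap at most `K` such that for every conjugate
pair `p, q ∈ [1,∞]` one has `‖ψ_k‖_p · ‖ψ_k‖_q ≤ M` for all `k`.  Let `f ∈ ℝ^n`,
`B ≤ n`.  For each `t = 0, …, L(L−1)` set `p_t = 1 + t/L` with Hölder conjugate `q t`,
and let `S t` be a set of `B` indices of the `B` largest values of
`|⟨f, ψ_k⟩| / ‖ψ_k‖_{q t}`.  Let `Sall = ∪_t S t` and
`f̂_u = Σ_{i ∈ Sall} ⟨f, ψ_i⟩ ψ_i`.  Then for every `p ∈ [1, ∞)`: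
`‖f − f̂_u‖_p ≤ 2·M·K·E_p`, where `E_p` is the minimum over `B`-sparse `z` of
`‖f − Σ_i z_i ψ_i‖_p`. -/
theorem stmt9 {L n B K : ℕ} (hL : 2 ≤ L) (hn : n = 2 ^ L)
    (ψ : Fin n → Fin n → ℝ)
    (horth : ∀ i k, dotp (ψ i) (ψ k) = if i = k then (1 : ℝ) else 0)
    (hK : ∀ j : Fin n, ({i | ψ i j ≠ 0} : Set (Fin n)).ncard ≤ K)
    (M : ℝ)
    (hM : ∀ p q : ℝ≥0∞, 1 ≤ p → 1 / p + 1 / q = 1 →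
      ∀ k, lpNorm p (ψ k) * lpNorm q (ψ k) ≤ M)
    (f : Fin n → ℝ) (hB : B ≤ n)
    (q : ℕ → ℝ≥0∞)
    (hq : ∀ t ≤ L * (L - 1), 1 / (1 + (t : ℝ≥0∞) / (L : ℝ≥0∞)) + 1 / q t = 1)
    (S : ℕ → Finset (Fin n))
    (hScard : ∀ t ≤ L * (L - 1), (S t).card = B)
    (hSord : ∀ t ≤ L * (L - 1), ∀ i ∈ S t, ∀ k ∉ S t,
      |dotp f (ψ k)| / lpNorm (q t) (ψ k) ≤ |dotp f (ψ i)| / lpNorm (q t) (ψ i))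
    (Sall : Finset (Fin n)) (hSall : Sall = (Finset.range (L * (L - 1) + 1)).biUnion S)
    (fu : Fin n → ℝ) (hfu : ∀ j, fu j = ∑ i ∈ Sall, dotp f (ψ i) * ψ i j) :
    ∀ p : ℝ≥0∞, 1 ≤ p → p ≠ ∞ →
      lpNorm p (fun j => f j - fu j) ≤
        2 * M * (K : ℝ) *
          sInf {e : ℝ | ∃ z : Fin n → ℝ, Sparse B z ∧
            e = lpNorm p (fun j => f j - ∑ i, z i * ψ i j)} :=
  stmt9_general hL hn ψ horth hK M hM f q hq S hScard hSord Sall hSall fu hfu
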